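/- Let (𝔄,𝒜,L) be a compact quantum metric space (i.e., a compact quantum semi metric space in which 𝒜 is norm-dense in 𝔄) and let Φ : 𝔄 → 𝔅 be a surjective unital *-homomorphism of unital C*-algebras. Define d on S(𝔅) by d(ν,ν') = ρ_L(ν∘Φ, ν'∘Φ), L_d(c) = sup{ |ν(c) − ν'(c)|/d(ν,ν') : ν,ν' ∈ S(𝔅), d(ν,ν') ≠ 0 }, and 𝒞 = { c ∈ 𝔅 : ν ↦ ν(c) is d-continuous and L_d(c) < ∞ }. Then 𝒞 is norm-dense in 𝔅. -/

import Mathlib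

open scoped ENNReal CStarAlgebra

noncomputable section

variable {A B : Type*} [CStarAlgebra A] [CStarAlgebra B]

/-- A state on a unital C*-algebra, viewed as an element of the weak* dual: a continuous
linear functional sending the unit to `1` and taking nonnegative real values on positive
elements `star a * a`. -/
def IsState {A : Type*} [CStarAlgebra A] (φ : WeakDual ℂ A) : Prop :=
  φ 1 = 1 ∧ ∀ a : A, 0 ≤ (φ (star a * a)).re ∧ (φ (star a * a)).im = 0

/-- The semi metric `ρ_L` on the state space of `A` associated with a subset `𝒜 ⊆ A` and a
function `L : A → ℝ`: `ρ_L(μ, ν) = sup { |μ a - ν a| : a ∈ 𝒜, L a ≤ 1 }`, valued in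
`[0, ∞]`. -/
def rhoL {A : Type*} [CStarAlgebra A] (𝒜 : Set A) (L : A → ℝ) (μ ν : WeakDual ℂ A) : ℝ≥0∞ :=
  ⨆ a ∈ {a : A | a ∈ 𝒜 ∧ L a ≤ 1}, (‖μ a - ν a‖₊ : ℝ≥0∞)

/-- The pullback `ν ∘ Φ` of a state `ν` on `B` along a unital *-homomorphism `Φ : A → B`
(star algebra homomorphisms between C*-algebras are automatically continuous). -/
def pull (Φ : A →⋆ₐ[ℂ] B) (ν : WeakDual ℂ B) : WeakDual ℂ A :=
  (ν : B →L[ℂ] ℂ).comp ⟨Φ.toLinearMap, map_continuous Φ⟩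

/-- The semi metric `d` on the state space of `B` induced by `(𝒜, L)` and `Φ`:
`d(ν, ν') = ρ_L(ν∘Φ, ν'∘Φ)`. -/
def dPull (𝒜 : Set A) (L : A → ℝ) (Φ : A →⋆ₐ[ℂ] B) (ν ν' : WeakDual ℂ B) : ℝ≥0∞ :=
  rhoL 𝒜 L (pull Φ ν) (pull Φ ν')

/-- The Lipschitz-type seminorm `L_d` on `B` induced by the semi metric `d = dPull` on the
state space of `B`: `L_d(c) = sup { |ν c - ν' c| / d(ν, ν') : ν, ν' states, d(ν, ν') ≠ 0 }`,
valued in `[0, ∞]`. -/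
def Ld (𝒜 : Set A) (L : A → ℝ) (Φ : A →⋆ₐ[ℂ] B) (c : B) : ℝ≥0∞ :=
  ⨆ (ν : {φ : WeakDual ℂ B // IsState φ}) (ν' : {φ : WeakDual ℂ B // IsState φ})
    (_ : dPull 𝒜 L Φ ν.1 ν'.1 ≠ 0), (‖ν.1 c - ν'.1 c‖₊ : ℝ≥0∞) / dPull 𝒜 L Φ ν.1 ν'.1

/-- Continuity of the evaluation map `ν ↦ ν c` on the state space of `B` with respect to the
semi metric `d = dPull`. -/
def DContinuous (𝒜 : Set A) (L : A → ℝ) (Φ : A →⋆ₐ[ℂ] B) (c : B) : Prop :=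
  ∀ ν : {φ : WeakDual ℂ B // IsState φ}, ∀ ε : ℝ, 0 < ε → ∃ δ : ℝ, 0 < δ ∧
    ∀ ν' : {φ : WeakDual ℂ B // IsState φ},
      dPull 𝒜 L Φ ν'.1 ν.1 < ENNReal.ofReal δ → ‖ν'.1 c - ν.1 c‖ < ε

/-!
Each `Φ a` with `a ∈ 𝒜` is Lipschitz for `d`: if `L a ≤ t` with `t > 0`, then `t⁻¹ • a` lies in
the `L`-unit ball, so `|ν (Φ a) - ν' (Φ a)| ≤ t · d(ν, ν')`. Such an element is `d`-continuous
with `L_d ≤ t`, and `Φ(𝒜)` is dense in `B` as the image of a dense set under a continuous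
surjection.
-/

open scoped NNReal

def DLipschitzWith (𝒜 : Set A) (L : A → ℝ) (Φ : A →⋆ₐ[ℂ] B) (K : ℝ≥0) (c : B) : Prop :=
  ∀ ν ν' : WeakDual ℂ B, ‖ν c - ν' c‖ₑ ≤ K * dPull 𝒜 L Φ ν ν'

section

variable {𝒜 : Set A} {L : A → ℝ} {Φ : A →⋆ₐ[ℂ] B} {K : ℝ≥0} {c : B}

theorem DLipschitzWith.dContinuous (h : DLipschitzWith 𝒜 L Φ K c) (hK : 0 < K) :
    DContinuous 𝒜 L Φ c := by
  intro ν ε hε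
  refine ⟨ε / K, by positivity, fun ν' hν' => ?_⟩
  have hlt : ‖ν'.1 c - ν.1 c‖ₑ < ENNReal.ofReal ε :=
    calc ‖ν'.1 c - ν.1 c‖ₑ ≤ K * dPull 𝒜 L Φ ν'.1 ν.1 := h ν'.1 ν.1
      _ < K * ENNReal.ofReal (ε / K) := by
        gcongr
        exact ENNReal.coe_ne_top
      _ = ENNReal.ofReal ε := by
        rw [← ENNReal.ofReal_coe_nnreal, ← ENNReal.ofReal_mul K.coe_nonneg,
          mul_div_cancel₀ ε (NNReal.coe_ne_zero.mpr hK.ne')]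
  rwa [← ofReal_norm, ENNReal.ofReal_lt_ofReal_iff hε] at hlt

theorem DLipschitzWith.ld_le (h : DLipschitzWith 𝒜 L Φ K c) : Ld 𝒜 L Φ c ≤ K :=
  iSup₂_le fun ν ν' => iSup_le fun _ => ENNReal.div_le_of_le_mul (h ν.1 ν'.1)

end

theorem enorm_sub_le_mul_rhoL (𝒜 : Submodule ℂ A) {L : A → ℝ}
    (hL_smul : ∀ (c : ℂ), ∀ a ∈ 𝒜, L (c • a) = ‖c‖ * L a) {a : A} (ha : a ∈ 𝒜) {t : ℝ≥0}
    (ht : 0 < t) (hLa : L a ≤ t) (μ ν : WeakDual ℂ A) :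
    ‖μ a - ν a‖ₑ ≤ t * rhoL 𝒜 L μ ν := by
  have ht' : ((t : ℝ) : ℂ) ≠ 0 := by exact_mod_cast ht.ne'
  set b : A := ((t : ℝ) : ℂ)⁻¹ • a
  have hb : b ∈ 𝒜 ∧ L b ≤ 1 := by
    refine ⟨𝒜.smul_mem _ ha, ?_⟩
    rw [hL_smul _ _ ha, norm_inv, Complex.norm_real, Real.norm_of_nonneg t.coe_nonneg]
    exact inv_mul_le_one_of_le₀ hLa t.coe_nonneg
  have hab : μ a - ν a = ((t : ℝ) : ℂ) * (μ b - ν b) := by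
    simp only [b, map_smul, smul_eq_mul, ← mul_sub, ← mul_assoc, mul_inv_cancel₀ ht', one_mul]
  calc ‖μ a - ν a‖ₑ = t * ‖μ b - ν b‖ₑ := by
        rw [hab, enorm_mul, ← ofReal_norm, Complex.norm_real, Real.norm_of_nonneg t.coe_nonneg,
          ENNReal.ofReal_coe_nnreal]
    _ ≤ t * rhoL 𝒜 L μ ν := by
      gcongr
      exact le_iSup₂ (f := fun x (_ : x ∈ {x : A | x ∈ (𝒜 : Set A) ∧ L x ≤ 1}) =>
        (‖μ x - ν x‖₊ : ℝ≥0∞)) b hb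

theorem dLipschitzWith_map (𝒜 : Submodule ℂ A) {L : A → ℝ}
    (hL_smul : ∀ (c : ℂ), ∀ a ∈ 𝒜, L (c • a) = ‖c‖ * L a) (Φ : A →⋆ₐ[ℂ] B) {a : A}
    (ha : a ∈ 𝒜) {t : ℝ≥0} (ht : 0 < t) (hLa : L a ≤ t) :
    DLipschitzWith 𝒜 L Φ t (Φ a) :=
  fun ν ν' => enorm_sub_le_mul_rhoL 𝒜 hL_smul ha ht hLa (pull Φ ν) (pull Φ ν')

theorem pullback_lipschitz_dense_general (𝒜 : Submodule ℂ A) (L : A → ℝ)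
    (hL_smul : ∀ (c : ℂ), ∀ a ∈ 𝒜, L (c • a) = ‖c‖ * L a)
    (hdense : Dense (𝒜 : Set A))
    (Φ : A →⋆ₐ[ℂ] B) (hΦsurj : Function.Surjective Φ) :
    Dense {c : B | DContinuous (𝒜 : Set A) L Φ c ∧ Ld (𝒜 : Set A) L Φ c ≠ ⊤} := by
  refine (hΦsurj.denseRange.dense_image (map_continuous Φ) hdense).mono ?_
  rintro _ ⟨a, ha, rfl⟩
  set t : ℝ≥0 := max (L a).toNNReal 1
  have ht : 0 < t := lt_max_of_lt_right one_pos
  have hLa : L a ≤ t := (Real.le_coe_toNNReal (L a)).trans (le_max_left _ _)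
  have hlip := dLipschitzWith_map 𝒜 hL_smul Φ ha ht hLa
  exact ⟨hlip.dContinuous ht, ne_top_of_le_ne_top ENNReal.coe_ne_top hlip.ld_le⟩

/-- Proposition 7 of the paper, for a quantum family over `ℂ`.  Let
`(A, 𝒜, L)` be a compact quantum metric space (so `𝒜` is norm-dense in `A`) and
`Φ : A → B` a surjective unital *-homomorphism.  With `d(ν, ν') = ρ_L(ν∘Φ, ν'∘Φ)`, the
space `𝒞 = { c ∈ B : ν ↦ ν c is d-continuous and L_d c < ∞ }` is norm-dense in `B`. -/
theorem pullback_lipschitz_dense (𝒜 : Submodule ℂ A)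
    (hstar : ∀ a ∈ 𝒜, star a ∈ 𝒜) (hone : (1 : A) ∈ 𝒜) (L : A → ℝ)
    (hL_nonneg : ∀ a ∈ 𝒜, 0 ≤ L a)
    (hL_add : ∀ a ∈ 𝒜, ∀ b ∈ 𝒜, L (a + b) ≤ L a + L b)
    (hL_smul : ∀ (c : ℂ), ∀ a ∈ 𝒜, L (c • a) = ‖c‖ * L a)
    (hL_star : ∀ a ∈ 𝒜, L (star a) = L a)
    (hL_zero : ∀ a ∈ 𝒜, (L a = 0 ↔ ∃ c : ℂ, a = c • (1 : A)))
    (hQSM : ∀ μ : WeakDual ℂ A, IsState μ → ∀ ε : ℝ, 0 < ε →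
      ∃ U : Set (WeakDual ℂ A), IsOpen U ∧ μ ∈ U ∧
        ∀ μ' ∈ U, IsState μ' → rhoL (𝒜 : Set A) L μ' μ < ENNReal.ofReal ε)
    (hdense : Dense (𝒜 : Set A))
    (Φ : A →⋆ₐ[ℂ] B) (hΦsurj : Function.Surjective Φ) :
    Dense {c : B | DContinuous (𝒜 : Set A) L Φ c ∧ Ld (𝒜 : Set A) L Φ c ≠ ⊤} :=
  pullback_lipschitz_dense_general 𝒜 L hL_smul hdense Φ hΦsurj

end
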